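/- Assume A ≠ α, and let (x_n)_{n≥-3} be a well-defined solution of the difference equation. Then for all integers n ≥ 1: x_{4n-2} = c·α^n·(A−α)·∏_{p=0}^{n-2} P_{2p+2}(a,c) / ∏_{p=0}^{n-1} P_{2p+1}(a,c), and x_{4n} = a·α^n·∏_{p=0}^{n-1} P_{2p+1}(a,c) / ∏_{p=0}^{n-1} P_{2p+2}(a,c), where P_k(u,v) = A^k·(A − α + B·u·v) − B·u·v·α^k. -/

import Mathlib

/-!
The even-indexed terms `y k = x (2k - 2)` satisfy `y (k+2) = α y k / (A + B y (k+1) y k)`,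
so the products `π k = y k * y (k+1)` of consecutive terms obey the Riccati equation
`π (k+1) = α π k / (A + B π k)`, which is linear in `1 / π`. Its solution is
`π k = π 0 α^k (A - α) / Q k` with `Q k = A^k (A - α + B π 0) - B π 0 α^k`, and then
`y (k+2) = α (Q k / Q (k+1)) y k` telescopes separately along even and odd `k`.
-/

open Finset

def riccatiDen (A α β : ℝ) (k : ℕ) : ℝ :=
  A ^ k * (A - α + β) - β * α ^ k

section Riccati

variable {A α β : ℝ}

@[simp]
lemma riccatiDen_zero : riccatiDen A α β 0 = A - α := by
  simp [riccatiDen]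

lemma riccatiDen_succ (k : ℕ) :
    riccatiDen A α β (k + 1) = A * riccatiDen A α β k + β * α ^ k * (A - α) := by
  unfold riccatiDen
  ring

variable {B : ℝ}

lemma add_mul_riccati_eq_div {p : ℝ} {k : ℕ} (hQ : riccatiDen A α (B * p) k ≠ 0) :
    A + B * (p * α ^ k * (A - α) / riccatiDen A α (B * p) k) =
      riccatiDen A α (B * p) (k + 1) / riccatiDen A α (B * p) k := by
  rw [riccatiDen_succ]
  field_simp

theorem riccati_closed_form {π : ℕ → ℝ} {p : ℝ} (hAα : A ≠ α) (h0 : π 0 = p)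
    (hden : ∀ k, A + B * π k ≠ 0) (hπ : ∀ k, π (k + 1) = α * π k / (A + B * π k)) (k : ℕ) :
    riccatiDen A α (B * p) k ≠ 0 ∧ π k = p * α ^ k * (A - α) / riccatiDen A α (B * p) k := by
  induction k with
  | zero => simp [h0, sub_ne_zero.mpr hAα]
  | succ k ih =>
    obtain ⟨hQ, hπk⟩ := ih
    have hshift := add_mul_riccati_eq_div hQ
    rw [← hπk] at hshift
    have hQ' : riccatiDen A α (B * p) (k + 1) ≠ 0 := fun h =>
      hden k (by rw [hshift, h, zero_div])
    refine ⟨hQ', ?_⟩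
    rw [hπ, hshift, hπk, ← mul_div_assoc, div_div_div_cancel_right₀ hQ, pow_succ]
    ring

end Riccati

theorem eq_mul_prod_of_rec_two {y f : ℕ → ℝ} (hy : ∀ k, y (k + 2) = f k * y k) (j n : ℕ) :
    y (2 * n + j) = y j * ∏ p ∈ range n, f (2 * p + j) := by
  induction n with
  | zero => simp
  | succ n ih =>
    rw [show 2 * (n + 1) + j = 2 * n + j + 2 by ring, hy, ih, prod_range_succ]
    ring

theorem rec_two_closed_form {A α B : ℝ} {y : ℕ → ℝ} (hAα : A ≠ α)
    (hden : ∀ k, A + B * y (k + 1) * y k ≠ 0)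
    (hy : ∀ k, y (k + 2) = α * y k / (A + B * y (k + 1) * y k)) (j n : ℕ) :
    y (2 * n + j) = y j * α ^ n *
      (∏ p ∈ range n, riccatiDen A α (B * (y 0 * y 1)) (2 * p + j)) /
      ∏ p ∈ range n, riccatiDen A α (B * (y 0 * y 1)) (2 * p + j + 1) := by
  have hcomm (k : ℕ) : A + B * y (k + 1) * y k = A + B * (y k * y (k + 1)) := by ring
  have hπ : ∀ k, riccatiDen A α (B * (y 0 * y 1)) k ≠ 0 ∧
      y k * y (k + 1) = y 0 * y 1 * α ^ k * (A - α) / riccatiDen A α (B * (y 0 * y 1)) k :=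
    riccati_closed_form (π := fun k => y k * y (k + 1)) hAα rfl
      (fun k => hcomm k ▸ hden k)
      (fun k => show y (k + 1) * y (k + 2) = _ by rw [hy, hcomm]; ring)
  have hstep (k : ℕ) : y (k + 2) = α * (riccatiDen A α (B * (y 0 * y 1)) k /
      riccatiDen A α (B * (y 0 * y 1)) (k + 1)) * y k := by
    obtain ⟨hQ, hπk⟩ := hπ k
    rw [hy, hcomm, hπk, add_mul_riccati_eq_div hQ, div_div_eq_mul_div]
    ring
  rw [eq_mul_prod_of_rec_two hstep, prod_mul_distrib, prod_const, card_range, prod_div_distrib]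
  ring

section EvenSubsequence

variable {α A B : ℝ} {x : ℤ → ℝ}

lemma den_even_subseq_ne_zero (hwd : ∀ n : ℤ, 0 ≤ n → A + B * x (n - 1) * x (n - 3) ≠ 0)
    (k : ℕ) : A + B * x (2 * (k + 1 : ℕ) - 2) * x (2 * k - 2) ≠ 0 := by
  convert hwd (2 * k + 1) (by positivity) using 4 <;> push_cast <;> ring_nf

lemma rec_even_subseq
    (hrec : ∀ n : ℤ, 0 ≤ n → x (n + 1) = α * x (n - 3) / (A + B * x (n - 1) * x (n - 3)))
    (k : ℕ) : x (2 * (k + 2 : ℕ) - 2) =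
      α * x (2 * k - 2) / (A + B * x (2 * (k + 1 : ℕ) - 2) * x (2 * k - 2)) := by
  convert hrec (2 * k + 1) (by positivity) using 2 <;> push_cast <;> ring_nf

end EvenSubsequence

theorem stmt_3_general (α A B a c : ℝ) (hAα : A ≠ α)
    (x : ℤ → ℝ)
    (hx2 : x (-2) = c) (hx0 : x 0 = a)
    (hwd : ∀ n : ℤ, 0 ≤ n → A + B * x (n - 1) * x (n - 3) ≠ 0)
    (hrec : ∀ n : ℤ, 0 ≤ n →
      x (n + 1) = α * x (n - 3) / (A + B * x (n - 1) * x (n - 3)))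
    (P : ℕ → ℝ → ℝ → ℝ)
    (hP : ∀ (k : ℕ) (u v : ℝ),
      P k u v = A ^ k * (A - α + B * u * v) - B * u * v * α ^ k) :
    ∀ n : ℕ, 1 ≤ n →
      x (4 * (n : ℤ) - 2) =
        c * α ^ n * (A - α) * (∏ p ∈ Finset.range (n - 1), P (2 * p + 2) a c) /
          (∏ p ∈ Finset.range n, P (2 * p + 1) a c) ∧
      x (4 * (n : ℤ)) =
        a * α ^ n * (∏ p ∈ Finset.range n, P (2 * p + 1) a c) /
          (∏ p ∈ Finset.range n, P (2 * p + 2) a c) := by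
  set y : ℕ → ℝ := fun k => x (2 * k - 2)
  have hden : ∀ k, A + B * y (k + 1) * y k ≠ 0 := den_even_subseq_ne_zero hwd
  have hy : ∀ k, y (k + 2) = α * y k / (A + B * y (k + 1) * y k) := rec_even_subseq hrec
  have hy0 : y 0 = c := by simp [y, hx2]
  have hy1 : y 1 = a := by simp [y, hx0]
  have hPQ (k : ℕ) : P k a c = riccatiDen A α (B * (c * a)) k := by
    rw [hP, riccatiDen]
    ring
  intro n hn
  obtain ⟨m, rfl⟩ := Nat.exists_eq_add_of_le' hn
  have heven : x (4 * ((m + 1 : ℕ) : ℤ) - 2) = y (2 * (m + 1) + 0) := by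
    congr 1; push_cast; ring
  have hodd : x (4 * ((m + 1 : ℕ) : ℤ)) = y (2 * (m + 1) + 1) := by
    congr 1; push_cast; ring
  rw [heven, hodd, rec_two_closed_form hAα hden hy, rec_two_closed_form hAα hden hy, hy0, hy1]
  simp only [hPQ, Nat.add_sub_cancel, add_zero, and_true]
  rw [prod_range_succ' _ m, riccatiDen_zero]
  simp only [mul_add, mul_one]
  ring

/-- Simplified formula (case `A ≠ α`) for the subsequences `x_{4n-2}` and `x_{4n}`,
where `P k u v = A^k (A - α + B u v) - B u v α^k`. -/
theorem stmt_3 (α A B a b c d : ℝ) (hα : α ≠ 0) (hB : B ≠ 0) (hAα : A ≠ α)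
    (ha : a ≠ 0) (hb : b ≠ 0) (hc : c ≠ 0) (hd : d ≠ 0)
    (x : ℤ → ℝ)
    (hx3 : x (-3) = d) (hx2 : x (-2) = c) (hx1 : x (-1) = b) (hx0 : x 0 = a)
    (hwd : ∀ n : ℤ, 0 ≤ n → A + B * x (n - 1) * x (n - 3) ≠ 0)
    (hrec : ∀ n : ℤ, 0 ≤ n →
      x (n + 1) = α * x (n - 3) / (A + B * x (n - 1) * x (n - 3)))
    (P : ℕ → ℝ → ℝ → ℝ)
    (hP : ∀ (k : ℕ) (u v : ℝ),
      P k u v = A ^ k * (A - α + B * u * v) - B * u * v * α ^ k) :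
    ∀ n : ℕ, 1 ≤ n →
      x (4 * (n : ℤ) - 2) =
        c * α ^ n * (A - α) * (∏ p ∈ Finset.range (n - 1), P (2 * p + 2) a c) /
          (∏ p ∈ Finset.range n, P (2 * p + 1) a c) ∧
      x (4 * (n : ℤ)) =
        a * α ^ n * (∏ p ∈ Finset.range n, P (2 * p + 1) a c) /
          (∏ p ∈ Finset.range n, P (2 * p + 2) a c) :=
  stmt_3_general α A B a c hAα x hx2 hx0 hwd hrec P hP
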